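/- arXiv:2511.19556 — 4 statements merged into one kernel-verified Lean document; each statement's English description precedes it below -/
import Mathlib

section
/- For every real c in the interval [1, 2], c·ln(c) − c + 1 ≥ (2·ln(2) − 1)·(c − 1)². -/
open Real Set

private noncomputable def K : ℝ := 2 * Real.log 2 - 1

private lemma K_lb : (0.386 : ℝ) < K := by
  have := Real.log_two_gt_d9
  unfold K; norm_num at this ⊢; linarith

private lemma K_ub : K < (0.3863 : ℝ) := by
  have := Real.log_two_lt_d9
  unfold K; norm_num at this ⊢; linarith

private noncomputable def g (c : ℝ) : ℝ := c * Real.log c - c + 1 - K * (c - 1) ^ 2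

private noncomputable def g' (c : ℝ) : ℝ := Real.log c - 2 * K * (c - 1)

private lemma hasDerivAt_g {c : ℝ} (hc : c ≠ 0) : HasDerivAt g (g' c) c := by
  have h1 : HasDerivAt (fun x : ℝ => x * Real.log x) (Real.log c + 1) c := by
    have := (hasDerivAt_id c).mul (Real.hasDerivAt_log hc)
    exact this.congr_deriv (by simp [mul_inv_cancel₀ hc, add_comm])
  have h2 := (((h1.sub (hasDerivAt_id c)).add_const 1)).sub
      (((((hasDerivAt_id c).sub_const 1)).pow 2).const_mul K)
  simp only [id_eq] at h2
  refine h2.congr_deriv ?_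
  unfold g'
  push_cast
  ring

private lemma hasDerivAt_g' {c : ℝ} (hc : c ≠ 0) : HasDerivAt g' (c⁻¹ - 2 * K) c := by
  have := (Real.hasDerivAt_log hc).sub
    ((((hasDerivAt_id c).sub_const 1)).const_mul (2 * K))
  exact this.congr_deriv (by ring)

private noncomputable def s : ℝ := (2 * K)⁻¹

private lemma s_mem : 1 < s ∧ s < 2 := by
  have h1 := K_lb; have h2 := K_ub
  have hK : 0 < 2 * K := by linarith
  have hprod : (2 * K) * (2 * K)⁻¹ = 1 := mul_inv_cancel₀ (ne_of_gt hK)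
  have hpos : 0 < (2 * K)⁻¹ := inv_pos.2 hK
  constructor <;> rw [s] <;> nlinarith

private lemma g_one : g 1 = 0 := by simp [g]

private lemma g'_one : g' 1 = 0 := by simp [g']

private lemma g_two : g 2 = 0 := by simp [g, K]; ring

private lemma cont_g : Continuous g := by
  unfold g
  exact ((continuous_mul_log.sub continuous_id).add continuous_const).sub
    (continuous_const.mul ((continuous_id.sub continuous_const).pow 2))

/-- `g` is nonneg on `[1, s]`. -/
private lemma g_nonneg_left {c : ℝ} (h1 : 1 ≤ c) (h2 : c ≤ s) : 0 ≤ g c := by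
  have hs := s_mem
  -- g' is monotone on [1,s] since its derivative c⁻¹ - 2K ≥ 0 there
  have hg'mono : MonotoneOn g' (Icc 1 s) := by
    apply monotoneOn_of_hasDerivWithinAt_nonneg (convex_Icc 1 s)
      (f' := fun x => x⁻¹ - 2 * K)
    · intro x hx
      exact (hasDerivAt_g' (by rcases hx with ⟨hx1, _⟩; positivity)).continuousAt.continuousWithinAt
    · intro x hx
      rw [interior_Icc] at hx
      exact (hasDerivAt_g' (by rcases hx with ⟨hx1, _⟩; positivity)).hasDerivWithinAt
    · intro x hx
      rw [interior_Icc] at hx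
      rcases hx with ⟨hx1, hx2⟩
      have hK : 0 < 2 * K := by have := K_lb; linarith
      have hx0 : (0:ℝ) < x := by linarith
      have h := inv_anti₀ hx0 (le_of_lt hx2)
      rw [s, inv_inv] at h
      linarith
  have hg'nonneg : ∀ x ∈ Icc 1 s, 0 ≤ g' x := by
    intro x hx
    have := hg'mono (left_mem_Icc.2 (le_of_lt hs.1)) hx hx.1
    rwa [g'_one] at this
  have hgmono : MonotoneOn g (Icc 1 s) := by
    apply monotoneOn_of_hasDerivWithinAt_nonneg (convex_Icc 1 s) (f' := g')
      cont_g.continuousOn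
    · intro x hx
      rw [interior_Icc] at hx
      exact (hasDerivAt_g (by rcases hx with ⟨hx1, _⟩; positivity)).hasDerivWithinAt
    · intro x hx
      rw [interior_Icc] at hx
      exact hg'nonneg x ⟨le_of_lt hx.1, le_of_lt hx.2⟩
  have := hgmono (left_mem_Icc.2 (by linarith [hs.1])) ⟨h1, h2⟩ h1
  rwa [g_one] at this

private lemma g_nonneg {c : ℝ} (h1 : 1 ≤ c) (h2 : c ≤ 2) : 0 ≤ g c := by
  have hs := s_mem
  rcases le_or_gt c s with hcs | hcs
  · exact g_nonneg_left h1 hcs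
  · -- concave on [s, 2]
    have hconc : ConcaveOn ℝ (Icc s 2) g := by
      apply concaveOn_of_hasDerivWithinAt2_nonpos (convex_Icc s 2)
        (f' := g') (f'' := fun x => x⁻¹ - 2 * K) cont_g.continuousOn
      · intro x hx
        rw [interior_Icc] at hx
        exact (hasDerivAt_g (by nlinarith [hx.1, hs.1])).hasDerivWithinAt
      · intro x hx
        rw [interior_Icc] at hx
        exact (hasDerivAt_g' (by nlinarith [hx.1, hs.1])).hasDerivWithinAt
      · intro x hx
        rw [interior_Icc] at hx
        rcases hx with ⟨hx1, hx2⟩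
        have hK : 0 < 2 * K := by have := K_lb; linarith
        have hx0 : 0 < x := by linarith [hs.1]
        have hs0 : (0:ℝ) < s := by linarith [hs.1]
        have h := inv_anti₀ hs0 (le_of_lt hx1)
        rw [s, inv_inv] at h
        linarith
    have hsm : s ∈ Icc s 2 := left_mem_Icc.2 (le_of_lt hs.2)
    have h2m : (2 : ℝ) ∈ Icc s 2 := right_mem_Icc.2 (le_of_lt hs.2)
    have hcseg : c ∈ segment ℝ s 2 := by
      rw [segment_eq_Icc (le_of_lt hs.2)]
      exact ⟨le_of_lt hcs, h2⟩
    have := hconc.ge_on_segment hsm h2m hcseg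
    have hgs : 0 ≤ g s := g_nonneg_left (le_of_lt hs.1) le_rfl
    rw [g_two] at this
    exact le_trans (le_min hgs le_rfl) this

/-- For every real `c ∈ [1, 2]`, `c ln c − c + 1 ≥ (2 ln 2 − 1)(c − 1)²`. -/
theorem mul_log_sub_self_ge (c : ℝ) (h1 : 1 ≤ c) (h2 : c ≤ 2) :
    (2 * Real.log 2 - 1) * (c - 1) ^ 2 ≤ c * Real.log c - c + 1 := by
  have := g_nonneg h1 h2
  unfold g K at this
  linarith
end

section
/- Let U be a finite set, P a probability mass function on U, and (Z_u)_{u∈U} i.i.d. Exponential(1) random variables. Then the random element argmin_{u∈U} Z_u / P(u) has distribution P. -/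
open MeasureTheory ProbabilityTheory Real Set

lemma expMeasure_apply' {s : Set ℝ} (hs : MeasurableSet s) :
    expMeasure 1 s = ∫⁻ x in s, exponentialPDF 1 x := by
  rw [expMeasure, gammaMeasure, withDensity_apply _ hs]
  rfl

lemma expMeasure_Iio_zero : expMeasure 1 (Iio 0) = 0 := by
  rw [expMeasure_apply' measurableSet_Iio]
  exact lintegral_exponentialPDF_of_nonpos le_rfl

lemma expMeasure_Ioi {a : ℝ} (ha : 0 ≤ a) :
    expMeasure 1 (Ioi a) = ENNReal.ofReal (Real.exp (-a)) := by
  haveI : IsProbabilityMeasure (expMeasure 1) := isProbabilityMeasure_expMeasure one_pos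
  have hIic : expMeasure 1 (Iic a) = ENNReal.ofReal (1 - Real.exp (-a)) := by
    rw [expMeasure_apply' measurableSet_Iic, lintegral_exponentialPDF_eq_antiDeriv one_pos,
      if_pos ha, one_mul]
  rw [compl_Iic.symm, measure_compl measurableSet_Iic (measure_ne_top _ _), hIic, measure_univ]
  rw [← ENNReal.ofReal_one, ← ENNReal.ofReal_sub _
    (by nlinarith [Real.exp_le_one_iff.2 (neg_nonpos.2 ha), Real.exp_pos (-a)])]
  norm_num

lemma expMeasure_lintegral {g : ℝ → ENNReal} (hg : Measurable g) :
    ∫⁻ t, g t ∂(expMeasure 1) = ∫⁻ t, (exponentialPDF 1 * g) t := by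
  have hpdf : Measurable (gammaPDF 1 1) := (measurable_gammaPDFReal 1 1).ennreal_ofReal
  rw [expMeasure, gammaMeasure, lintegral_withDensity_eq_lintegral_mul _ hpdf hg]
  rfl

lemma pi_inst_irrel {ι : Type*} (F1 F2 : Fintype ι) {κ : ι → Type*}
    [∀ i, MeasurableSpace (κ i)] (μ : ∀ i, Measure (κ i)) :
    @Measure.pi ι κ F1 _ μ = @Measure.pi ι κ F2 _ μ := by
  cases Subsingleton.elim F1 F2; rfl

lemma map_pi_of_iIndepFun {Ω U : Type*} [MeasurableSpace Ω] [Fintype U]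
    (μ : Measure Ω) [IsProbabilityMeasure μ]
    (Z : U → Ω → ℝ) (hmeas : ∀ u, Measurable (Z u))
    (hindep : iIndepFun Z μ) :
    μ.map (fun ω (i : U) => Z i ω) = Measure.pi (fun i => μ.map (Z i)) := by
  haveI : ∀ i, IsProbabilityMeasure (μ.map (Z i)) :=
    fun i => Measure.isProbabilityMeasure_map (hmeas i).aemeasurable
  refine (Measure.pi_eq fun s hs => ?_).symm
  rw [Measure.map_apply (measurable_pi_lambda _ fun i => hmeas i)
    (MeasurableSet.univ_pi hs)]
  have hpre : (fun ω (i : U) => Z i ω) ⁻¹' (Set.pi univ s) = ⋂ i, Z i ⁻¹' s i := by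
    ext ω; simp [Set.mem_pi]
  rw [hpre, hindep.meas_iInter fun i => ⟨s i, hs i, rfl⟩]
  exact Finset.prod_congr rfl fun i _ =>
    (Measure.map_apply (hmeas i) (hs i)).symm

/-- Exponential functional representation: let `U` be a finite set, `P` a probability mass
function on `U`, and `(Z_u)` i.i.d. `Exponential(1)` random variables. Then the random
element `argmin_u Z_u / P(u)` has distribution `P` (with `Z_u / P(u) = +∞` when `P(u) = 0`;
the argmin event is encoded by cross-multiplication). -/
theorem exponential_functional_representation_dist
    {Ω U : Type*} [MeasurableSpace Ω] [Fintype U]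
    (μ : Measure Ω) [IsProbabilityMeasure μ]
    (P : U → ℝ) (hP0 : ∀ u, 0 ≤ P u) (hP1 : ∑ u, P u = 1)
    (Z : U → Ω → ℝ) (hmeas : ∀ u, Measurable (Z u))
    (hindep : iIndepFun Z μ)
    (hdist : ∀ u, μ.map (Z u) = expMeasure 1)
    (u : U) :
    μ {ω | ∀ v, v ≠ u → P v * Z u ω < P u * Z v ω} = ENNReal.ofReal (P u) := by
  classical
  haveI : IsProbabilityMeasure (expMeasure 1) := isProbabilityMeasure_expMeasure one_pos
  rcases eq_or_lt_of_le (hP0 u) with hPu | hPu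
  · -- degenerate case P u = 0
    obtain ⟨v, hv⟩ : ∃ v, 0 < P v := by
      by_contra h
      push_neg at h
      have : ∑ w, P w ≤ 0 := Finset.sum_nonpos fun w _ => h w
      linarith
    have hvu : v ≠ u := by
      rintro rfl; rw [← hPu] at hv; exact lt_irrefl _ hv
    have hsub : {ω | ∀ w, w ≠ u → P w * Z u ω < P u * Z w ω} ⊆ Z u ⁻¹' (Iio 0) := by
      intro ω hω
      have h1 := hω v hvu
      rw [← hPu, zero_mul] at h1
      by_contra h2
      simp only [Set.mem_preimage, Set.mem_Iio, not_lt] at h2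
      exact absurd h1 (not_lt.2 (mul_nonneg (hP0 v) h2))
    have hz : μ (Z u ⁻¹' Iio 0) = 0 := by
      rw [← Measure.map_apply (hmeas u) measurableSet_Iio, hdist u]
      exact expMeasure_Iio_zero
    have h0 : μ {ω | ∀ w, w ≠ u → P w * Z u ω < P u * Z w ω} = 0 :=
      measure_mono_null hsub hz
    rw [h0, ← hPu, ENNReal.ofReal_zero]
  · -- main case 0 < P u
    have hne : P u ≠ 0 := ne_of_gt hPu
    have hmap : μ.map (fun ω (i : U) => Z i ω)
        = Measure.pi (fun _ : U => expMeasure 1) := by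
      rw [map_pi_of_iIndepFun μ Z hmeas hindep]
      congr 1
      exact funext fun i => hdist i
    set S : Set (U → ℝ) := {x | ∀ v, v ≠ u → P v * x u < P u * x v} with hSdef
    have hSmeas : MeasurableSet S := by
      have : S = ⋂ v, ⋂ (_ : v ≠ u), {x : U → ℝ | P v * x u < P u * x v} := by
        ext x; simp [hSdef]
      rw [this]
      exact MeasurableSet.iInter fun v => MeasurableSet.iInter fun _ =>
        measurableSet_lt ((measurable_pi_apply u).const_mul _)
          ((measurable_pi_apply v).const_mul _)
    have hμS : μ {ω | ∀ v, v ≠ u → P v * Z u ω < P u * Z v ω}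
        = Measure.pi (fun _ : U => expMeasure 1) S := by
      rw [← hmap, Measure.map_apply (measurable_pi_lambda _ fun i => hmeas i) hSmeas]
      rfl
    rw [hμS]
    haveI hU : Unique {v : U // v = u} := ⟨⟨⟨u, rfl⟩⟩, fun v => Subtype.ext v.2⟩
    have hdefault : ((default : {v : U // v = u}) : U) = u :=
      (default : {v : U // v = u}).2
    have hep := measurePreserving_piEquivPiSubtypeProd
      (fun _ : U => expMeasure 1) (fun v => v = u)
    set T : Set (({v : U // v = u} → ℝ) × ({v : U // ¬ v = u} → ℝ)) :=
      {p | ∀ v : {v : U // ¬ v = u}, P ↑v * p.1 default < P u * p.2 v} with hTdef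
    have hTmeas : MeasurableSet T := by
      rw [hTdef, Set.setOf_forall]
      exact MeasurableSet.iInter fun v => measurableSet_lt
        (((measurable_pi_apply _).comp measurable_fst).const_mul _)
        (((measurable_pi_apply _).comp measurable_snd).const_mul _)
    have hST : S = (MeasurableEquiv.piEquivPiSubtypeProd (fun _ : U => ℝ)
        (fun v => v = u)) ⁻¹' T := by
      ext x
      simp only [hSdef, hTdef, Set.mem_preimage, Set.mem_setOf_eq,
        MeasurableEquiv.piEquivPiSubtypeProd, MeasurableEquiv.coe_mk,
        Equiv.piEquivPiSubtypeProd_apply, hdefault, Subtype.forall]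
      try exact ⟨fun h v hv => h v hv, fun h v hv => h v hv⟩
    have hslice : ∀ a : {v : U // v = u} → ℝ, Prod.mk a ⁻¹' T =
        Set.pi univ (fun v : {v : U // ¬ v = u} => Ioi (P ↑v * a default / P u)) := by
      intro a
      ext y
      simp only [hTdef, Set.mem_preimage, Set.mem_setOf_eq, Set.mem_pi, Set.mem_univ,
        forall_true_left, Set.mem_Ioi]
      refine forall_congr' fun v => ?_
      rw [div_lt_iff₀ hPu, mul_comm (y v) (P u)]
    have hg : Measurable fun t : ℝ =>
        ∏ v : {v : U // ¬ v = u}, expMeasure 1 (Ioi (P ↑v * t / P u)) := by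
      refine Finset.measurable_prod _ fun v _ => Antitone.measurable fun s t hst => ?_
      exact measure_mono (Ioi_subset_Ioi
        (div_le_div_of_nonneg_right (mul_le_mul_of_nonneg_left hst (hP0 v)) hPu.le))
    -- the final integral computation
    have hsum : ∑ v : {v : U // ¬ v = u}, P ↑v = 1 - P u := by
      have h1 : ∑ v ∈ Finset.univ.erase u, P v = ∑ v : {v : U // ¬ v = u}, P ↑v :=
        Finset.sum_subtype _ (fun x => by simp [Finset.mem_erase]) P
      have h2 : P u + ∑ v ∈ Finset.univ.erase u, P v = 1 := by
        rw [Finset.add_sum_erase _ _ (Finset.mem_univ u), hP1]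
      rw [h1] at h2
      linarith
    have hpoint : ∀ t : ℝ, (exponentialPDF 1 * fun t =>
        ∏ v : {v : U // ¬ v = u}, expMeasure 1 (Ioi (P ↑v * t / P u))) t
        = ENNReal.ofReal (P u) * exponentialPDF (1 / P u) t := by
      intro t
      simp only [Pi.mul_apply]
      rcases lt_or_ge t 0 with ht | ht
      · rw [exponentialPDF_of_neg ht, exponentialPDF_of_neg ht, zero_mul, mul_zero]
      · rw [exponentialPDF_of_nonneg ht, exponentialPDF_of_nonneg ht]
        have hfac : ∀ v : {v : U // ¬ v = u}, expMeasure 1 (Ioi (P ↑v * t / P u))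
            = ENNReal.ofReal (Real.exp (-(P ↑v * t / P u))) := fun v =>
          expMeasure_Ioi (div_nonneg (mul_nonneg (hP0 _) ht) hPu.le)
        simp_rw [hfac]
        rw [← ENNReal.ofReal_prod_of_nonneg (fun v _ => (Real.exp_pos _).le),
          ← ENNReal.ofReal_mul (by positivity), ← ENNReal.ofReal_mul (by positivity)]
        congr 1
        have hsum2 : ∑ v : {v : U // ¬ v = u}, -(P ↑v * t / P u)
            = -((1 - P u) * t / P u) := by
          rw [Finset.sum_neg_distrib]
          congr 1
          rw [← Finset.sum_div, ← Finset.sum_mul, hsum]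
        rw [one_mul, one_mul, ← Real.exp_sum, hsum2, ← Real.exp_add]
        have harg : -t + -((1 - P u) * t / P u) = -(1 / P u * t) := by
          field_simp
          ring
        rw [harg, ← mul_assoc, mul_one_div, div_self hne, one_mul]
    have hfinal : ∫⁻ t, (∏ v : {v : U // ¬ v = u},
        expMeasure 1 (Ioi (P ↑v * t / P u))) ∂(expMeasure 1)
        = ENNReal.ofReal (P u) := by
      rw [expMeasure_lintegral hg, lintegral_congr hpoint,
        lintegral_const_mul' _ _ ENNReal.ofReal_ne_top,
        lintegral_exponentialPDF_eq_one (by positivity : (0:ℝ) < 1 / P u), mul_one]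
    rw [hST, hep.measure_preimage hTmeas.nullMeasurableSet, Measure.prod_apply hTmeas]
    simp_rw [hslice, Measure.pi_pi]
    have hfu := measurePreserving_funUnique (expMeasure 1) {v : U // v = u}
    rw [pi_inst_irrel _ (Subtype.fintype fun v : U => v = u)] at hfu
    exact (hfu.lintegral_comp hg).trans hfinal
end

section
/- Let α > 1 and η ∈ (0,1] with η < α − 1. Define c_{α,η} := Γ(1 − (η+1)/α)·Γ(η+1) / (Γ(1 − 1/α))^{η+1}. Then for η = min{(α−1)/2, 1}, one has c_{α,η} ≤ 2.56. -/
open Real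

/-- Gamma is at most 1 on [1,2], by convexity. -/
lemma aux_gamma_le_one {x : ℝ} (h1 : 1 ≤ x) (h2 : x ≤ 2) : Real.Gamma x ≤ 1 := by
  have h := Real.convexOn_Gamma.2 (Set.mem_Ioi.2 one_pos) (Set.mem_Ioi.2 two_pos)
    (show (0:ℝ) ≤ 2 - x by linarith) (show (0:ℝ) ≤ x - 1 by linarith)
    (show (2 - x) + (x - 1) = 1 by ring)
  have e : (2 - x) • (1:ℝ) + (x - 1) • (2:ℝ) = x := by
    simp only [smul_eq_mul]; ring
  rw [e, Real.Gamma_one, Real.Gamma_two] at h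
  simp only [smul_eq_mul, mul_one] at h
  linarith

set_option maxHeartbeats 800000 in
/-- `sin (π x) ≤ 4 x (1-x)` for `x ∈ (0,1)`. -/
lemma aux_sin_le {x : ℝ} (h0 : 0 < x) (h1 : x < 1) : Real.sin (π * x) ≤ 4 * x * (1 - x) := by
  have hpl : (3.14:ℝ) < π := Real.pi_gt_d2
  have hpu : π < 3.15 := Real.pi_lt_d2
  by_cases hA : x ≤ 1 - π / 4
  · have h2 : Real.sin (π * x) ≤ π * x := Real.sin_le (by positivity)
    nlinarith
  · by_cases hB : π / 4 ≤ x
    · have h2 : Real.sin (π * x) = Real.sin (π * (1 - x)) := by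
        rw [show π * (1 - x) = π - π * x by ring, Real.sin_pi_sub]
      have h3 : Real.sin (π * (1 - x)) ≤ π * (1 - x) := Real.sin_le (by nlinarith)
      nlinarith
    · push_neg at hA hB
      set y := π * x - π / 2 with hy
      have hs : Real.sin (π * x) = Real.cos y := by
        rw [hy, Real.cos_sub_pi_div_two]
      have hd1 : y < 1 := by rw [hy]; nlinarith
      have hd2 : -1 < y := by rw [hy]; nlinarith
      have hyabs : |y| ≤ 1 := abs_le.2 ⟨by linarith, by linarith⟩
      have hcb := Real.cos_bound hyabs
      have h4 : |y| ^ 4 = y ^ 4 := by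
        rw [pow_abs, abs_of_nonneg (by positivity)]
      rw [h4] at hcb
      have hcos : Real.cos y ≤ 1 - y ^ 2 / 2 + y ^ 4 * (5 / 96) := by
        have h5 := abs_le.1 hcb
        linarith [h5.2]
      rw [hs]
      -- y = π (x - 1/2), with (x-1/2)^2 ≤ (π/4 - 1/2)^2 ≤ 0.0827
      have hy2 : y ^ 2 = π ^ 2 * (x - 1/2) ^ 2 := by rw [hy]; ring
      have hy4 : y ^ 4 = π ^ 4 * (x - 1/2) ^ 4 := by rw [hy]; ring
      have hd : (x - 1/2) ^ 2 ≤ 0.0827 := by nlinarith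
      have hp2 : (9.8596:ℝ) ≤ π ^ 2 := by nlinarith
      have hp2u : π ^ 2 ≤ 9.9225 := by nlinarith
      have hp4 : π ^ 4 ≤ 98.52 := by nlinarith [sq_nonneg (9.9225 - π ^ 2)]
      have hd4 : (x - 1/2) ^ 4 ≤ 0.0827 * (x - 1/2) ^ 2 := by
        nlinarith [mul_le_mul_of_nonneg_right hd (sq_nonneg (x - 1/2))]
      have hd4' : (0:ℝ) ≤ (x - 1/2) ^ 4 := by positivity
      have h5 : π ^ 4 * (x - 1/2) ^ 4 ≤ 98.52 * (0.0827 * (x - 1/2) ^ 2) :=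
        mul_le_mul hp4 hd4 hd4' (by norm_num)
      have c1 : 9.8596 * (x - 1/2) ^ 2 ≤ π ^ 2 * (x - 1/2) ^ 2 :=
        mul_le_mul_of_nonneg_right hp2 (sq_nonneg _)
      have e2 : 4 * x * (1 - x) = 1 - 4 * (x - 1/2) ^ 2 := by ring
      rw [e2]
      calc Real.cos y ≤ 1 - y ^ 2 / 2 + y ^ 4 * (5 / 96) := hcos
        _ = 1 - π ^ 2 * (x - 1/2) ^ 2 / 2 + π ^ 4 * (x - 1/2) ^ 4 * (5 / 96) := by
            rw [hy2, hy4]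
        _ ≤ 1 - 4 * (x - 1/2) ^ 2 := by nlinarith [h5, c1]

/-- Lower bound `Γ(1-t) ≥ π / (4 (1-t))` for `t ∈ (0,1)`. -/
lemma aux_gamma_lb {t : ℝ} (h0 : 0 < t) (h1 : t < 1) :
    π / (4 * (1 - t)) ≤ Real.Gamma (1 - t) := by
  have hπ : (0:ℝ) < π := Real.pi_pos
  have hsin : 0 < Real.sin (π * t) :=
    Real.sin_pos_of_pos_of_lt_pi (by positivity) (by nlinarith)
  have hΓt : 0 < Real.Gamma t := Real.Gamma_pos_of_pos h0
  have hpos : 0 < Real.sin (π * t) * Real.Gamma t := mul_pos hsin hΓt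
  have hΓt' : Real.Gamma t ≤ 1 / t := by
    have h2 : Real.Gamma (t + 1) = t * Real.Gamma t := Real.Gamma_add_one (ne_of_gt h0)
    have h3 : Real.Gamma (t + 1) ≤ 1 := aux_gamma_le_one (by linarith) (by linarith)
    rw [le_div_iff₀ h0]; nlinarith
  have hrefl : Real.Gamma t * Real.Gamma (1 - t) = π / Real.sin (π * t) :=
    Real.Gamma_mul_Gamma_one_sub t
  have hΓ1t : Real.Gamma (1 - t) = π / (Real.sin (π * t) * Real.Gamma t) := by
    rw [eq_div_iff (ne_of_gt hpos)]
    calc Real.Gamma (1 - t) * (Real.sin (π * t) * Real.Gamma t)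
        = (Real.Gamma t * Real.Gamma (1 - t)) * Real.sin (π * t) := by ring
      _ = π / Real.sin (π * t) * Real.sin (π * t) := by rw [hrefl]
      _ = π := div_mul_cancel₀ _ (ne_of_gt hsin)
  rw [hΓ1t]
  have hden : Real.sin (π * t) * Real.Gamma t ≤ 4 * (1 - t) := by
    have hs4 : Real.sin (π * t) ≤ 4 * t * (1 - t) := aux_sin_le h0 h1
    have step1 : Real.sin (π * t) * Real.Gamma t ≤ (4 * t * (1 - t)) * (1 / t) :=
      mul_le_mul hs4 hΓt' hΓt.le (by nlinarith)
    have step2 : (4 * t * (1 - t)) * (1 / t) = 4 * (1 - t) := by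
      field_simp
    linarith [step1, step2.le, step2.ge]
  exact div_le_div_of_nonneg_left hπ.le hpos hden

set_option maxHeartbeats 1000000 in
/-- For `α > 1` and `η = min{(α−1)/2, 1}`, the constant
`c_{α,η} = Γ(1 − (η+1)/α) Γ(η+1) / (Γ(1 − 1/α))^{η+1}` satisfies `c_{α,η} ≤ 2.56`. -/
theorem c_alpha_eta_le (α : ℝ) (hα : 1 < α) :
    Real.Gamma (1 - (min ((α - 1) / 2) 1 + 1) / α) * Real.Gamma (min ((α - 1) / 2) 1 + 1)
        / Real.Gamma (1 - 1 / α) ^ (min ((α - 1) / 2) 1 + 1)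
      ≤ 2.56 := by
  have hα0 : (0:ℝ) < α := by linarith
  have hαne : α ≠ 0 := ne_of_gt hα0
  have hα1 : (0:ℝ) < α - 1 := by linarith
  have hpl : (3.14:ℝ) < π := Real.pi_gt_d2
  have hpu : π < 3.15 := Real.pi_lt_d2
  set m := min ((α - 1) / 2) 1 with hm
  have hm0 : 0 < m := lt_min (by linarith) one_pos
  have hm1 : m ≤ 1 := min_le_right _ _
  have hmhalf : m ≤ (α - 1) / 2 := min_le_left _ _
  have hs1 : (m + 1) / α < 1 := by
    rw [div_lt_one hα0]; linarith
  have hs0 : 0 < (m + 1) / α := by positivity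
  have ht0 : 0 < 1 / α := by positivity
  have ht1 : 1 / α < 1 := by rw [div_lt_one hα0]; linarith
  have hs1' : (0:ℝ) < 1 - (m + 1) / α := by linarith
  have ht1' : (0:ℝ) < 1 - 1 / α := by linarith
  -- numerator bounds
  have hA : Real.Gamma (1 - (m + 1) / α) ≤ 1 / (1 - (m + 1) / α) := by
    have h2 : Real.Gamma ((1 - (m + 1) / α) + 1)
        = (1 - (m + 1) / α) * Real.Gamma (1 - (m + 1) / α) :=
      Real.Gamma_add_one (ne_of_gt hs1')
    have h3 : Real.Gamma ((1 - (m + 1) / α) + 1) ≤ 1 :=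
      aux_gamma_le_one (by linarith) (by linarith)
    have h4 : 0 < Real.Gamma (1 - (m + 1) / α) := Real.Gamma_pos_of_pos hs1'
    rw [le_div_iff₀ hs1']
    nlinarith
  have hA0 : 0 ≤ Real.Gamma (1 - (m + 1) / α) := (Real.Gamma_pos_of_pos hs1').le
  have hB : Real.Gamma (m + 1) ≤ 1 := aux_gamma_le_one (by linarith) (by linarith)
  have hB0 : 0 ≤ Real.Gamma (m + 1) := (Real.Gamma_pos_of_pos (by linarith)).le
  -- denominator lower bound
  have hC : π / (4 * (1 - 1 / α)) ≤ Real.Gamma (1 - 1 / α) := aux_gamma_lb ht0 ht1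
  have hCb0 : 0 < π / (4 * (1 - 1 / α)) := by
    apply div_pos Real.pi_pos; linarith
  have hCrpow : (π / (4 * (1 - 1 / α))) ^ (m + 1) ≤ Real.Gamma (1 - 1 / α) ^ (m + 1) :=
    Real.rpow_le_rpow hCb0.le hC (by linarith)
  have hD0 : (0:ℝ) < (π / (4 * (1 - 1 / α))) ^ (m + 1) := Real.rpow_pos_of_pos hCb0 _
  have hG0 : (0:ℝ) < Real.Gamma (1 - 1 / α) ^ (m + 1) :=
    Real.rpow_pos_of_pos (Real.Gamma_pos_of_pos (by linarith)) _
  have step : Real.Gamma (1 - (m + 1) / α) * Real.Gamma (m + 1)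
        / Real.Gamma (1 - 1 / α) ^ (m + 1)
      ≤ (1 / (1 - (m + 1) / α)) / (π / (4 * (1 - 1 / α))) ^ (m + 1) := by
    calc Real.Gamma (1 - (m + 1) / α) * Real.Gamma (m + 1) / Real.Gamma (1 - 1 / α) ^ (m + 1)
        ≤ Real.Gamma (1 - (m + 1) / α) * Real.Gamma (m + 1)
            / (π / (4 * (1 - 1 / α))) ^ (m + 1) := by
          apply div_le_div_of_nonneg_left (mul_nonneg hA0 hB0) hD0 hCrpow
      _ ≤ (1 / (1 - (m + 1) / α)) * 1 / (π / (4 * (1 - 1 / α))) ^ (m + 1) := by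
          exact (div_le_div_iff_of_pos_right hD0).2 (mul_le_mul hA hB hB0 (by positivity))
      _ = (1 / (1 - (m + 1) / α)) / (π / (4 * (1 - 1 / α))) ^ (m + 1) := by rw [mul_one]
  refine step.trans ?_
  rcases le_or_gt α 3 with hcase | hcase
  · -- α ≤ 3 : m = (α-1)/2, base ≥ 1, use exponent ≥ 1
    have hmeq : m = (α - 1) / 2 := min_eq_left (by linarith)
    have hbase1 : (1:ℝ) ≤ π / (4 * (1 - 1 / α)) := by
      rw [le_div_iff₀ (by linarith : (0:ℝ) < 4 * (1 - 1 / α)), one_mul]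
      have e2 : 4 * (1 - 1 / α) = (4 * α - 4) / α := by field_simp
      rw [e2, div_le_iff₀ hα0]
      nlinarith
    have hDlb : π / (4 * (1 - 1 / α)) ≤ (π / (4 * (1 - 1 / α))) ^ (m + 1) := by
      calc π / (4 * (1 - 1 / α)) = (π / (4 * (1 - 1 / α))) ^ (1:ℝ) := (Real.rpow_one _).symm
        _ ≤ (π / (4 * (1 - 1 / α))) ^ (m + 1) :=
          Real.rpow_le_rpow_of_exponent_le hbase1 (by linarith)
    have step2 : (1 / (1 - (m + 1) / α)) / (π / (4 * (1 - 1 / α))) ^ (m + 1)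
        ≤ (1 / (1 - (m + 1) / α)) / (π / (4 * (1 - 1 / α))) := by
      apply div_le_div_of_nonneg_left (by positivity) hCb0 hDlb
    refine step2.trans ?_
    have e3 : (1 / (1 - (m + 1) / α)) / (π / (4 * (1 - 1 / α))) = 8 / π := by
      rw [hmeq]
      rw [show 1 - ((α - 1) / 2 + 1) / α = (α - 1) / (2 * α) by field_simp; ring,
        show 1 - 1 / α = (α - 1) / α by field_simp]
      rw [one_div_div]
      rw [div_eq_div_iff (by positivity) (ne_of_gt Real.pi_pos)]
      field_simp
      ring
    rw [e3, div_le_iff₀ Real.pi_pos]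
    nlinarith
  · -- α > 3 : m = 1, exponent = 2
    have hα2 : (0:ℝ) < α - 2 := by linarith
    have hmeq : m = 1 := min_eq_right (by linarith)
    rw [hmeq]
    have hexp : (1:ℝ) + 1 = (2:ℝ) := by norm_num
    have hsq : (π / (4 * (1 - 1 / α))) ^ ((1:ℝ) + 1) = (π / (4 * (1 - 1 / α))) ^ (2:ℕ) := by
      rw [hexp, ← Real.rpow_natCast]; norm_num
    rw [hsq]
    have e4 : (1 / (1 - ((1:ℝ) + 1) / α)) / (π / (4 * (1 - 1 / α))) ^ (2:ℕ)
        = 16 * (α - 1) ^ 2 / (π ^ 2 * (α * (α - 2))) := by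
      rw [show 1 - ((1:ℝ) + 1) / α = (α - 2) / α by field_simp; ring,
        show 1 - 1 / α = (α - 1) / α by field_simp]
      rw [div_eq_div_iff (by positivity) (by positivity)]
      field_simp
      ring
    rw [e4, div_le_iff₀ (by positivity)]
    have hp2 : (9.8596:ℝ) ≤ π ^ 2 := by nlinarith
    have hq : (0:ℝ) ≤ α * (α - 2) := by positivity
    nlinarith [mul_le_mul_of_nonneg_right hp2 hq,
      mul_nonneg (show (0:ℝ) ≤ α - 3 by linarith) (show (0:ℝ) ≤ α + 1 by linarith)]
end

section
/- Let P₁, P₂ be probability measures on a measurable space, both absolutely continuous with respect to a σ-finite measure Q, satisfying ∫ max{ρ₁(z) − e^ε ρ₂(z), 0} Q(dz) ≤ δ and ∫ max{ρ₂(z) − e^ε ρ₁(z), 0} Q(dz) ≤ δ, where ρ_j = dP_j/dQ and ε, δ ≥ 0. Then there exists a probability measure P₃ absolutely continuous with respect to Q such that (1) e^{−ε}·ρ₂(z) ≤ dP₃/dQ(z) ≤ e^{ε}·ρ₂(z) for Q-almost every z, and (2) the total variation distance between P₁ and P₃ is at most δ. -/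
open MeasureTheory Set

/-!
Clip `ρ₁` into the band `[e^{-ε} ρ₂, e^{ε} ρ₂]`: this only removes the part of `ρ₁` outside the
band, whose mass the hypotheses bound by `δ`. The clipped density `c` need not have mass one, but
the band's edges have masses `e^{-ε} ≤ 1 ≤ e^{ε}`, so a convex combination of `c` with one edge
has mass one, and it moves `c` away from `ρ₁` only on the side whose excess is already controlled.
For two densities of equal mass, the positive and negative parts of their difference have the
same integral, and it bounds the total variation distance.
-/

section PositivePart

variable {Ω : Type*} [MeasurableSpace Ω] {μ : Measure Ω} {f g : Ω → ℝ}

lemma integral_max_sub_zero_comm (hf : Integrable f μ) (hg : Integrable g μ)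
    (h : ∫ z, f z ∂μ = ∫ z, g z ∂μ) :
    ∫ z, max (f z - g z) 0 ∂μ = ∫ z, max (g z - f z) 0 ∂μ := by
  have hpart (z : Ω) : max (f z - g z) 0 - max (g z - f z) 0 = f z - g z := by
    rw [← neg_sub (f z), max_zero_sub_max_neg_zero_eq_self]
  have hzero : ∫ z, (max (f z - g z) 0 - max (g z - f z) 0) ∂μ = 0 := by
    simp only [hpart, integral_sub hf hg, h, sub_self]
  have hfg : Integrable (fun z => max (f z - g z) 0) μ := (hf.sub hg).pos_part
  have hgf : Integrable (fun z => max (g z - f z) 0) μ := (hg.sub hf).pos_part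
  rw [integral_sub hfg hgf] at hzero
  linarith

lemma setIntegral_sub_le_integral_max_sub_zero (hf : Integrable f μ) (hg : Integrable g μ)
    (S : Set Ω) : ∫ z in S, (f z - g z) ∂μ ≤ ∫ z, max (f z - g z) 0 ∂μ :=
  calc ∫ z in S, (f z - g z) ∂μ ≤ ∫ z in S, max (f z - g z) 0 ∂μ :=
        integral_mono (hf.sub hg).restrict (hf.sub hg).pos_part.restrict fun _ => le_max_left _ _
    _ ≤ ∫ z, max (f z - g z) 0 ∂μ :=
        setIntegral_le_integral (hf.sub hg).pos_part (ae_of_all _ fun _ => le_max_right _ _)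

lemma abs_setIntegral_sub_le_integral_max_sub_zero (hf : Integrable f μ) (hg : Integrable g μ)
    (h : ∫ z, f z ∂μ = ∫ z, g z ∂μ) (S : Set Ω) :
    |∫ z in S, f z ∂μ - ∫ z in S, g z ∂μ| ≤ ∫ z, max (f z - g z) 0 ∂μ := by
  rw [← integral_sub hf.restrict hg.restrict, abs_le, neg_le, ← integral_neg]
  simp only [neg_sub]
  exact ⟨integral_max_sub_zero_comm hf hg h ▸ setIntegral_sub_le_integral_max_sub_zero hg hf S,
    setIntegral_sub_le_integral_max_sub_zero hf hg S⟩

lemma integral_max_inv_mul_sub_le {a : ℝ} (ha : 1 ≤ a) (f g : Ω → ℝ) :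
    ∫ z, max (a⁻¹ * f z - g z) 0 ∂μ ≤ ∫ z, max (f z - a * g z) 0 ∂μ := by
  have ha₀ : a ≠ 0 := by positivity
  have hscale (z : Ω) : max (a⁻¹ * f z - g z) 0 = a⁻¹ * max (f z - a * g z) 0 := by
    rw [mul_max_of_nonneg _ _ (by positivity), mul_zero, mul_sub, inv_mul_cancel_left₀ ha₀]
  simp only [hscale, integral_const_mul]
  exact mul_le_of_le_one_left (integral_nonneg fun _ => le_max_right _ _) (inv_le_one_of_one_le₀ ha)

end PositivePart

section Interpolation

variable {Ω : Type*} [MeasurableSpace Ω] {μ : Measure Ω}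

lemma exists_integrable_between_integral_eq {c d : Ω → ℝ} (hc : Integrable c μ)
    (hd : Integrable d μ) (hcd : ∀ z, c z ≤ d z) {m : ℝ}
    (hm : m ∈ Icc (∫ z, c z ∂μ) (∫ z, d z ∂μ)) :
    ∃ g : Ω → ℝ, Integrable g μ ∧ (∀ z, g z ∈ Icc (c z) (d z)) ∧ ∫ z, g z ∂μ = m := by
  rw [← segment_eq_Icc (integral_mono hc hd hcd), segment_eq_image] at hm
  obtain ⟨θ, hθ, rfl⟩ := hm
  refine ⟨fun z => (1 - θ) * c z + θ * d z, (hc.const_mul _).add (hd.const_mul _),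
    fun z => ?_, ?_⟩
  · rw [← segment_eq_Icc (hcd z), segment_eq_image]
    exact ⟨θ, hθ, rfl⟩
  · rw [integral_add (hc.const_mul _) (hd.const_mul _), integral_const_mul, integral_const_mul]
    rfl

theorem exists_between_integral_eq_integral_max_sub_le {f lo hi : Ω → ℝ} {δ : ℝ}
    (hf : Integrable f μ) (hlo : Integrable lo μ) (hhi : Integrable hi μ)
    (hlohi : ∀ z, lo z ≤ hi z)
    (hf_mem : ∫ z, f z ∂μ ∈ Icc (∫ z, lo z ∂μ) (∫ z, hi z ∂μ))
    (hf_hi : ∫ z, max (f z - hi z) 0 ∂μ ≤ δ) (hlo_f : ∫ z, max (lo z - f z) 0 ∂μ ≤ δ) :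
    ∃ g : Ω → ℝ, Integrable g μ ∧ (∀ z, g z ∈ Icc (lo z) (hi z)) ∧
      ∫ z, g z ∂μ = ∫ z, f z ∂μ ∧ ∫ z, max (f z - g z) 0 ∂μ ≤ δ := by
  set c : Ω → ℝ := fun z => max (lo z) (min (f z) (hi z)) with hc_def
  have hc : Integrable c μ := hlo.sup (hf.inf hhi)
  have hc_mem (z : Ω) : c z ∈ Icc (lo z) (hi z) :=
    ⟨le_max_left _ _, max_le (hlohi z) (min_le_right _ _)⟩
  rcases le_total (∫ z, c z ∂μ) (∫ z, f z ∂μ) with hcf | hfc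
  · obtain ⟨g, hg, hg_mem, hg_int⟩ := exists_integrable_between_integral_eq hc hhi
      (fun z => (hc_mem z).2) ⟨hcf, hf_mem.2⟩
    refine ⟨g, hg, fun z => ⟨(hc_mem z).1.trans (hg_mem z).1, (hg_mem z).2⟩, hg_int,
      (integral_mono (hf.sub hg).pos_part (hf.sub hhi).pos_part fun z => ?_).trans hf_hi⟩
    have : f z - c z ≤ max (f z - hi z) 0 := by
      simp only [hc_def]; grind
    exact max_le ((sub_le_sub_left (hg_mem z).1 _).trans this) (le_max_right _ _)
  · obtain ⟨g, hg, hg_mem, hg_int⟩ := exists_integrable_between_integral_eq hlo hc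
      (fun z => (hc_mem z).1) ⟨hf_mem.1, hfc⟩
    refine ⟨g, hg, fun z => ⟨(hg_mem z).1, (hg_mem z).2.trans (hc_mem z).2⟩, hg_int, ?_⟩
    rw [integral_max_sub_zero_comm hf hg hg_int.symm]
    refine (integral_mono (hg.sub hf).pos_part (hlo.sub hf).pos_part fun z => ?_).trans hlo_f
    have : c z - f z ≤ max (lo z - f z) 0 := by
      simp only [hc_def]; grind
    exact max_le ((sub_le_sub_right (hg_mem z).2 _).trans this) (le_max_right _ _)

end Interpolation

section WithDensity

variable {Ω : Type*} [MeasurableSpace Ω] {μ : Measure Ω} {g : Ω → ℝ}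

lemma toReal_withDensity_ofReal_apply (hg : Integrable g μ) (hg_nonneg : ∀ z, 0 ≤ g z)
    {S : Set Ω} (hS : MeasurableSet S) :
    (μ.withDensity (fun z => ENNReal.ofReal (g z)) S).toReal = ∫ z in S, g z ∂μ := by
  rw [withDensity_apply _ hS, ← ofReal_integral_eq_lintegral_ofReal hg.restrict
    (ae_of_all _ hg_nonneg), ENNReal.toReal_ofReal (integral_nonneg hg_nonneg)]

lemma isProbabilityMeasure_withDensity_ofReal (hg : Integrable g μ) (hg_nonneg : ∀ z, 0 ≤ g z)
    (hg_int : ∫ z, g z ∂μ = 1) :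
    IsProbabilityMeasure (μ.withDensity fun z => ENNReal.ofReal (g z)) :=
  ⟨by rw [← ENNReal.toReal_eq_one_iff, toReal_withDensity_ofReal_apply hg hg_nonneg .univ,
    setIntegral_univ, hg_int]⟩

lemma toReal_rnDeriv_withDensity_ofReal [SigmaFinite μ] (hg : Integrable g μ)
    (hg_nonneg : ∀ z, 0 ≤ g z) :
    ∀ᵐ z ∂μ, ((μ.withDensity fun z => ENNReal.ofReal (g z)).rnDeriv μ z).toReal = g z := by
  filter_upwards [Measure.rnDeriv_withDensity₀ μ hg.aemeasurable.ennreal_ofReal] with z hz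
  rw [hz, ENNReal.toReal_ofReal (hg_nonneg z)]

end WithDensity

theorem exists_intermediate_measure_general
    {Ω : Type*} [MeasurableSpace Ω]
    (P₁ P₂ Q : Measure Ω) [IsProbabilityMeasure P₁] [IsProbabilityMeasure P₂]
    [SigmaFinite Q] (h1 : P₁ ≪ Q) (h2 : P₂ ≪ Q)
    (ε δ : ℝ) (hε : 0 ≤ ε)
    (hb1 : ∫ z, max ((P₁.rnDeriv Q z).toReal - Real.exp ε * (P₂.rnDeriv Q z).toReal) 0 ∂Q
      ≤ δ)
    (hb2 : ∫ z, max ((P₂.rnDeriv Q z).toReal - Real.exp ε * (P₁.rnDeriv Q z).toReal) 0 ∂Q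
      ≤ δ) :
    ∃ P₃ : Measure Ω, IsProbabilityMeasure P₃ ∧ P₃ ≪ Q ∧
      (∀ᵐ z ∂Q, Real.exp (-ε) * (P₂.rnDeriv Q z).toReal ≤ (P₃.rnDeriv Q z).toReal ∧
        (P₃.rnDeriv Q z).toReal ≤ Real.exp ε * (P₂.rnDeriv Q z).toReal) ∧
      ∀ S : Set Ω, MeasurableSet S → |(P₁ S).toReal - (P₃ S).toReal| ≤ δ := by
  set ρ₁ : Ω → ℝ := fun z => (P₁.rnDeriv Q z).toReal
  set ρ₂ : Ω → ℝ := fun z => (P₂.rnDeriv Q z).toReal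
  have hρ₁ : Integrable ρ₁ Q := Measure.integrable_toReal_rnDeriv
  have hρ₂ : Integrable ρ₂ Q := Measure.integrable_toReal_rnDeriv
  have hρ₁_int : ∫ z, ρ₁ z ∂Q = 1 := by simp [ρ₁, Measure.integral_toReal_rnDeriv h1]
  have hρ₂_int : ∫ z, ρ₂ z ∂Q = 1 := by simp [ρ₂, Measure.integral_toReal_rnDeriv h2]
  have hlo_f : ∫ z, max (Real.exp (-ε) * ρ₂ z - ρ₁ z) 0 ∂Q ≤ δ := by
    simpa only [Real.exp_neg] using
      (integral_max_inv_mul_sub_le (Real.one_le_exp hε) ρ₂ ρ₁).trans hb2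
  obtain ⟨g, hg, hg_mem, hg_int, hg_close⟩ :=
    exists_between_integral_eq_integral_max_sub_le hρ₁ (hρ₂.const_mul _) (hρ₂.const_mul _)
      (fun z => mul_le_mul_of_nonneg_right (Real.exp_le_exp.2 (by linarith))
        ENNReal.toReal_nonneg)
      (by simp only [integral_const_mul, hρ₁_int, hρ₂_int, mul_one, mem_Icc,
        Real.exp_le_one_iff, Real.one_le_exp_iff, neg_nonpos]; exact ⟨hε, hε⟩)
      hb1 hlo_f
  have hg_nonneg (z : Ω) : 0 ≤ g z :=
    (mul_nonneg (Real.exp_pos _).le ENNReal.toReal_nonneg).trans (hg_mem z).1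
  refine ⟨Q.withDensity fun z => ENNReal.ofReal (g z),
    isProbabilityMeasure_withDensity_ofReal hg hg_nonneg (hg_int.trans hρ₁_int),
    withDensity_absolutelyContinuous _ _, ?_, fun S hS => ?_⟩
  · filter_upwards [toReal_rnDeriv_withDensity_ofReal hg hg_nonneg] with z hz
    exact hz ▸ hg_mem z
  · rw [toReal_withDensity_ofReal_apply hg hg_nonneg hS, ← measureReal_def,
      ← Measure.setIntegral_toReal_rnDeriv h1]
    exact (abs_setIntegral_sub_le_integral_max_sub_zero hρ₁ hg hg_int.symm S).trans hg_close

/-- Let `P₁, P₂` be probability measures absolutely continuous w.r.t. a σ-finite measure `Q`,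
with densities `ρⱼ = dPⱼ/dQ` satisfying `∫ max{ρ₁ − e^ε ρ₂, 0} dQ ≤ δ` and
`∫ max{ρ₂ − e^ε ρ₁, 0} dQ ≤ δ`. Then there exists a probability measure `P₃ ≪ Q` with
`e^{−ε} ρ₂ ≤ dP₃/dQ ≤ e^{ε} ρ₂` `Q`-a.e. and total variation distance between `P₁` and
`P₃` at most `δ`. -/
theorem exists_intermediate_measure
    {Ω : Type*} [MeasurableSpace Ω]
    (P₁ P₂ Q : Measure Ω) [IsProbabilityMeasure P₁] [IsProbabilityMeasure P₂]
    [SigmaFinite Q] (h1 : P₁ ≪ Q) (h2 : P₂ ≪ Q)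
    (ε δ : ℝ) (hε : 0 ≤ ε) (hδ : 0 ≤ δ)
    (hb1 : ∫ z, max ((P₁.rnDeriv Q z).toReal - Real.exp ε * (P₂.rnDeriv Q z).toReal) 0 ∂Q
      ≤ δ)
    (hb2 : ∫ z, max ((P₂.rnDeriv Q z).toReal - Real.exp ε * (P₁.rnDeriv Q z).toReal) 0 ∂Q
      ≤ δ) :
    ∃ P₃ : Measure Ω, IsProbabilityMeasure P₃ ∧ P₃ ≪ Q ∧
      (∀ᵐ z ∂Q, Real.exp (-ε) * (P₂.rnDeriv Q z).toReal ≤ (P₃.rnDeriv Q z).toReal ∧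
        (P₃.rnDeriv Q z).toReal ≤ Real.exp ε * (P₂.rnDeriv Q z).toReal) ∧
      ∀ S : Set Ω, MeasurableSet S → |(P₁ S).toReal - (P₃ S).toReal| ≤ δ :=
  exists_intermediate_measure_general P₁ P₂ Q h1 h2 ε δ hε hb1 hb2
end
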